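/- Let x₁ = k(1 - q₁E₁/r). If (1 - (d + q₂E₂)/(epk - ak(d + q₂E₂))) < q₁E₁/r < 1 and epk - ak(d+q₂E₂) > 0, then both eigenvalues λ₁ = r - 2rx₁/k - q₁E₁ and λ₂ = -d - q₂E₂ + epx₁/(1 + ax₁) of the Jacobian at the axial equilibrium (x₁, 0) are negative. -/

import Mathlib

/-! With `s = q₁E₁/r` the axial equilibrium is `x₁ = k(1 - s)`, so `λ₁ = -r(1 - s) < 0` as soon as
`s < 1`. For `λ₂`, the lower bound on `s` rearranges to `x₁ (ep - aD) < D` with `D = d + q₂E₂`,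
i.e. `ep x₁ < D (1 + a x₁)`, which is `λ₂ < 0` because `1 + a x₁ > 0`. -/

lemma logistic_eigenvalue_eq {r k c : ℝ} (hr : r ≠ 0) (hk : k ≠ 0) :
    r - 2 * r * (k * (1 - c / r)) / k - c = c - r := by
  field_simp
  ring

lemma mul_div_one_add_mul_lt {a c D x : ℝ} (ha : 0 ≤ a) (hx : 0 ≤ x)
    (h : x * (c - a * D) < D) : c * x / (1 + a * x) < D := by
  rw [div_lt_iff₀ (by positivity)]
  linarith

lemma one_sub_mul_lt_of_one_sub_div_lt {m D s : ℝ} (hm : 0 < m) (h : 1 - D / m < s) :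
    (1 - s) * m < D := by
  rw [← lt_div_iff₀ hm]
  linarith

theorem stmt_6_general (r k p a d e q1 q2 E1 E2 : ℝ)
    (hr : 0 < r) (hk : 0 < k) (ha : 0 < a)
    (hden : e * p * k - a * k * (d + q2 * E2) > 0)
    (hlow : 1 - (d + q2 * E2) / (e * p * k - a * k * (d + q2 * E2)) < q1 * E1 / r)
    (hup : q1 * E1 / r < 1) :
    r - 2 * r * (k * (1 - q1 * E1 / r)) / k - q1 * E1 < 0 ∧
    -d - q2 * E2 + e * p * (k * (1 - q1 * E1 / r)) / (1 + a * (k * (1 - q1 * E1 / r))) < 0 := by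
  have hcr : q1 * E1 < r := (div_lt_one hr).1 hup
  have hx₁ : 0 ≤ k * (1 - q1 * E1 / r) := mul_nonneg hk.le (by linarith)
  constructor
  · rw [logistic_eigenvalue_eq hr.ne' hk.ne']
    linarith
  · have hthreshold := one_sub_mul_lt_of_one_sub_div_lt hden hlow
    have hstable : e * p * (k * (1 - q1 * E1 / r)) / (1 + a * (k * (1 - q1 * E1 / r))) <
        d + q2 * E2 :=
      mul_div_one_add_mul_lt ha.le hx₁ (by linear_combination hthreshold)
    linarith

theorem stmt_6 (r k p a d e q1 q2 E1 E2 : ℝ)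
    (hr : 0 < r) (hk : 0 < k) (hp : 0 < p) (ha : 0 < a) (hd : 0 < d) (he : 0 < e)
    (hq1 : 0 < q1) (hq2 : 0 < q2) (hE1 : 0 ≤ E1) (hE2 : 0 ≤ E2)
    (hlt : q1 * E1 < r)
    (hden : e * p * k - a * k * (d + q2 * E2) > 0)
    (hlow : 1 - (d + q2 * E2) / (e * p * k - a * k * (d + q2 * E2)) < q1 * E1 / r)
    (hup : q1 * E1 / r < 1) :
    r - 2 * r * (k * (1 - q1 * E1 / r)) / k - q1 * E1 < 0 ∧
    -d - q2 * E2 + e * p * (k * (1 - q1 * E1 / r)) / (1 + a * (k * (1 - q1 * E1 / r))) < 0 :=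
  stmt_6_general r k p a d e q1 q2 E1 E2 hr hk ha hden hlow hup
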